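/- There exists a complex separable Hilbert evolution algebra 𝒜 with a natural orthonormal basis 𝓑 = {e_i}_{i∈ℕ} such that the associated digraph G(𝒜,𝓑) contains no oriented cycles and yet 𝒜 is not nil (there is v ∈ 𝒜 with v^n ≠ 0 for all n ∈ ℕ). Hence, for infinite-dimensional Hilbert evolution algebras, the absence of oriented cycles in the associated digraph does not imply that the algebra is nil. -/

import Mathlib

noncomputable section

open scoped ENat

/-! ### Digraph notions associated to a matrix of structural constants

The associated digraph `G(𝒜,𝓑)` has vertex set `ℕ` and a directed edge `(i,k)` iff
`ω i k ≠ 0`. -/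

/-- `DsetU ω m U` is the set `D^m(U)` of `m`-th generation descendants of `U`:
`D^0(U) = U` and `D^{m+1}(U) = {k | ∃ i ∈ D^m(U), ω i k ≠ 0}`. -/
def DsetU (ω : ℕ → ℕ → ℂ) : ℕ → Set ℕ → Set ℕ
  | 0, U => U
  | m + 1, U => {k | ∃ i ∈ DsetU ω m U, ω i k ≠ 0}

/-- `Dm ω m i = D^m(i)`, the `m`-th generation descendants of the vertex `i`. -/
def Dm (ω : ℕ → ℕ → ℂ) (m i : ℕ) : Set ℕ := DsetU ω m {i}

/-- `Desc ω i = D(i) = ⋃_{m ≥ 1} D^m(i)`, the set of descendants of `i`. -/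
def Desc (ω : ℕ → ℕ → ℂ) (i : ℕ) : Set ℕ := ⋃ m ∈ {m : ℕ | 1 ≤ m}, Dm ω m i

/-- `gdist ω i u` is the length of a shortest directed path (walk) from `i` to `u`. -/
def gdist (ω : ℕ → ℕ → ℂ) (i u : ℕ) : ℕ := sInf {n : ℕ | u ∈ Dm ω n i}

/-- The depth `δ(G_i) = sup {dist(i,u) : u ∈ D(i)}` of the subgraph `G_i` induced on the
descendants of `i`, as an extended natural number (`⊤` when unbounded). -/
def depth (ω : ℕ → ℕ → ℂ) (i : ℕ) : ℕ∞ := ⨆ u ∈ Desc ω i, (gdist ω i u : ℕ∞)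

/-- `p 0, p 1, …, p n` is an oriented cycle: a non-empty directed path in which the only
repeated vertices are the first and the last one. -/
def IsOrientedCycle (ω : ℕ → ℕ → ℂ) (n : ℕ) (p : ℕ → ℕ) : Prop :=
  0 < n ∧ (∀ m < n, ω (p m) (p (m + 1)) ≠ 0) ∧ p n = p 0 ∧
    ∀ a b, a < b → b < n → p a ≠ p b

/-- The digraph associated to `ω` contains an oriented cycle. -/
def HasOrientedCycle (ω : ℕ → ℕ → ℂ) : Prop := ∃ n p, IsOrientedCycle ω n p

/-! ### Algebra notions -/

variable {H : Type*} [NormedAddCommGroup H] [InnerProductSpace ℂ H] [CompleteSpace H]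

/-- The structural constants of a Hilbert evolution algebra with product `mul` relative to
the natural orthonormal basis `e`: `ω i k` is the `k`-th coordinate of `e i · e i`,
so that `e i · e i = ∑'_k ω i k • e k`. -/
def structConst (mul : H →ₗ[ℂ] H →ₗ[ℂ] H) (e : HilbertBasis ℕ ℂ H) (i k : ℕ) : ℂ :=
  e.repr (mul (e i) (e i)) k

/-- Principal powers: `ppow mul v n = v^n` for `n ≥ 1` (with the junk value `v` at `n = 0`):
`v^1 = v` and `v^{n+1} = v^n · v`. -/
def ppow (mul : H →ₗ[ℂ] H →ₗ[ℂ] H) (v : H) : ℕ → H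
  | 0 => v
  | 1 => v
  | n + 2 => mul (ppow mul v (n + 1)) v

/-- The algebra is nil: every element has a vanishing principal power. -/
def IsNil (mul : H →ₗ[ℂ] H →ₗ[ℂ] H) : Prop := ∀ v : H, ∃ n : ℕ, 1 ≤ n ∧ ppow mul v n = 0

/-- The product `S·T` of two subspaces: the span of all products `x·y`, `x ∈ S`, `y ∈ T`. -/
def mulSub (mul : H →ₗ[ℂ] H →ₗ[ℂ] H) (S T : Submodule ℂ H) : Submodule ℂ H :=
  Submodule.span ℂ {z : H | ∃ x ∈ S, ∃ y ∈ T, z = mul x y}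

/-- The powers `𝒜^n` (for `n ≥ 1`, with the junk value `⊤` at `n = 0`):
`𝒜^1 = 𝒜` and `𝒜^{n+1} = ∑_{i=1}^{n} 𝒜^i 𝒜^{n+1-i}`. -/
def apow (mul : H →ₗ[ℂ] H →ₗ[ℂ] H) (n : ℕ) : Submodule ℂ H :=
  n.strongRecOn fun n ih =>
    match n, ih with
    | 0, _ => ⊤
    | 1, _ => ⊤
    | m + 2, ih =>
      ⨆ (i : ℕ) (h1 : 1 ≤ i) (h2 : i ≤ m + 1),
        mulSub mul (ih i (by omega)) (ih (m + 2 - i) (by omega))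

/-- The algebra is nilpotent: `𝒜^n = 0` for some `n`. -/
def IsNilpotent' (mul : H →ₗ[ℂ] H →ₗ[ℂ] H) : Prop := ∃ n : ℕ, 1 ≤ n ∧ apow mul n = ⊥

/-- The right powers `𝒜^{<n>}` (for `n ≥ 1`, with the junk value `⊤` at `n = 0`):
`𝒜^{<1>} = 𝒜` and `𝒜^{<n+1>} = 𝒜^{<n>}𝒜`. -/
def rapow (mul : H →ₗ[ℂ] H →ₗ[ℂ] H) : ℕ → Submodule ℂ H
  | 0 => ⊤
  | 1 => ⊤
  | n + 2 => mulSub mul (rapow mul (n + 1)) ⊤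

/-- The algebra is right nilpotent: `𝒜^{<n>} = 0` for some `n`. -/
def IsRightNilpotent (mul : H →ₗ[ℂ] H →ₗ[ℂ] H) : Prop := ∃ n : ℕ, 1 ≤ n ∧ rapow mul n = ⊥

/-- The index of right nilpotency `n_r(𝒜) = min {n : 𝒜^{<n>} = 0}`. -/
def rNilIndex (mul : H →ₗ[ℂ] H →ₗ[ℂ] H) : ℕ := sInf {n : ℕ | 1 ≤ n ∧ rapow mul n = ⊥}

/-- Powers of a subset `I ⊆ 𝒜` (for `n ≥ 1`, with the junk value `I` at `n = 0`):
`I^{<1>} = I` and `I^{<n+1>}` is the set of finite sums `∑_j x_j · y_j` with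
`x_j ∈ I^{<n>}` and `y_j ∈ I`. -/
def setPow (mul : H →ₗ[ℂ] H →ₗ[ℂ] H) (I : Set H) : ℕ → Set H
  | 0 => I
  | 1 => I
  | n + 2 => {v : H | ∃ (m : ℕ) (x y : Fin m → H),
      (∀ j, x j ∈ setPow mul I (n + 1)) ∧ (∀ j, y j ∈ I) ∧
        v = ∑ j, mul (x j) (y j)}

end

/-- A (complex, separable) Hilbert evolution algebra: a complex Hilbert space endowed with
a commutative bilinear product whose left multiplications are continuous, admitting a
natural orthonormal basis `{e i}_{i ∈ ℕ}` (a Hilbert basis with `e i · e j = 0` for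
`i ≠ j`); separability follows since the Hilbert basis is indexed by `ℕ`. -/
structure HilbertEvolutionAlgebra where
  /-- the underlying space -/
  H : Type
  [normed : NormedAddCommGroup H]
  [ips : InnerProductSpace ℂ H]
  [complete : CompleteSpace H]
  /-- the bilinear product -/
  mul : H →ₗ[ℂ] H →ₗ[ℂ] H
  comm : ∀ x y : H, mul x y = mul y x
  cont : ∀ x : H, Continuous fun y => mul x y
  /-- the natural orthonormal basis -/
  basis : HilbertBasis ℕ ℂ H
  natural : ∀ i j : ℕ, i ≠ j → mul (basis i) (basis j) = 0

attribute [instance] HilbertEvolutionAlgebra.normed HilbertEvolutionAlgebra.ips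
  HilbertEvolutionAlgebra.complete


/-!
On `ℓ²(ℕ, ℂ)` take the shifted pointwise product `(x·y)₀ = 0`, `(x·y)ₖ₊₁ = xₖ yₖ`. The standard
basis is natural with `eᵢ·eᵢ = eᵢ₊₁`, so the digraph is the ray `0 → 1 → 2 → ⋯`, which has no
oriented cycle. Yet if no coordinate of `v` vanishes, the `n`-th coordinate of `v^(n+1)` is
`v₀ v₀ v₁ ⋯ vₙ₋₁ ≠ 0`, since each power moves one step further along the ray.
-/

open scoped lp ENNReal

lemma not_hasOrientedCycle_of_lt {ω : ℕ → ℕ → ℂ} (h : ∀ i k, ω i k ≠ 0 → i < k) :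
    ¬ HasOrientedCycle ω := by
  rintro ⟨n, p, hn, hedge, hclosed, -⟩
  have hgrow : ∀ m ≤ n, p 0 + m ≤ p m := by
    intro m hm
    induction m with
    | zero => rfl
    | succ m ih => exact Nat.succ_le_of_lt ((ih (by omega)).trans_lt (h _ _ (hedge m hm)))
  have := hgrow n le_rfl
  omega

section seqShift

variable {E : Type*}

def seqShift [Zero E] (f : ℕ → E) : ℕ → E
  | 0 => 0
  | k + 1 => f k

@[simp] lemma seqShift_zero [Zero E] (f : ℕ → E) : seqShift f 0 = 0 := rfl

@[simp] lemma seqShift_succ [Zero E] (f : ℕ → E) (k : ℕ) : seqShift f (k + 1) = f k := rfl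

variable [NormedAddCommGroup E] {p : ℝ≥0∞}

lemma Memℓp.seqShift (hp : 0 < p.toReal) {f : ℕ → E} (hf : Memℓp f p) :
    Memℓp (seqShift f) p :=
  memℓp_gen <| (summable_nat_add_iff 1).mp (hf.summable hp)

lemma lp.norm_eq_of_coe_eq_seqShift (hp : 0 < p.toReal) {f g : lp (fun _ : ℕ => E) p}
    (h : ⇑g = seqShift ⇑f) : ‖g‖ = ‖f‖ := by
  have hsum : ∑' k, ‖g k‖ ^ p.toReal = ∑' k, ‖f k‖ ^ p.toReal := by
    rw [((lp.memℓp g).summable hp).tsum_eq_zero_add, h]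
    simp [Real.zero_rpow hp.ne']
  rw [← lp.norm_rpow_eq_tsum hp, ← lp.norm_rpow_eq_tsum hp] at hsum
  exact (Real.rpow_left_inj (lp.norm_nonneg' g) (lp.norm_nonneg' f) hp.ne').mp hsum

end seqShift

section pointwiseMul

variable {α 𝕜 : Type*} [NormedRing 𝕜] [NormedSpace ℝ 𝕜] {p q : ℝ≥0∞}

lemma lp.norm_apply_mul_le (hq : q ≠ 0) (x : lp (fun _ : α => 𝕜) q) (y : lp (fun _ : α => 𝕜) p)
    (i : α) : ‖x i * y i‖ ≤ ‖(‖x‖ • y) i‖ := by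
  rw [lp.coeFn_smul, Pi.smul_apply, norm_smul, Real.norm_of_nonneg (lp.norm_nonneg' x)]
  exact (norm_mul_le _ _).trans (by gcongr; exact lp.norm_apply_le_norm hq x i)

lemma lp.memℓp_mul (hq : q ≠ 0) (x : lp (fun _ : α => 𝕜) q) (y : lp (fun _ : α => 𝕜) p) :
    Memℓp (⇑x * ⇑y) p :=
  (lp.memℓp (‖x‖ • y)).mono' (lp.norm_apply_mul_le hq x y)

lemma lp.norm_le_of_coe_eq_mul [Fact (1 ≤ p)] (hq : q ≠ 0) {x : lp (fun _ : α => 𝕜) q}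
    {y z : lp (fun _ : α => 𝕜) p} (h : ⇑z = ⇑x * ⇑y) : ‖z‖ ≤ ‖x‖ * ‖y‖ := by
  calc ‖z‖ ≤ ‖‖x‖ • y‖ := lp.norm_mono (zero_lt_one.trans_le Fact.out).ne' fun i => by
        rw [h]; exact lp.norm_apply_mul_le hq x y i
    _ = ‖x‖ * ‖y‖ := by rw [norm_smul, Real.norm_of_nonneg (lp.norm_nonneg' x)]

end pointwiseMul

noncomputable section

namespace ShiftEvolutionAlgebra

def mulFun (x y : ℓ²(ℕ, ℂ)) : ℓ²(ℕ, ℂ) :=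
  ⟨seqShift fun k => x k * y k, (lp.memℓp_mul two_ne_zero x y).seqShift (by norm_num)⟩

@[simp] lemma coe_mulFun (x y : ℓ²(ℕ, ℂ)) : ⇑(mulFun x y) = seqShift fun k => x k * y k := rfl

def mul : ℓ²(ℕ, ℂ) →ₗ[ℂ] ℓ²(ℕ, ℂ) →ₗ[ℂ] ℓ²(ℕ, ℂ) :=
  LinearMap.mk₂ ℂ mulFun
    (fun x x' y => by ext k; simp only [lp.coeFn_add]; cases k <;> simp [add_mul])
    (fun c x y => by ext k; cases k <;> simp [mul_assoc])
    (fun x y y' => by ext k; simp only [lp.coeFn_add]; cases k <;> simp [mul_add])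
    (fun c x y => by ext k; cases k <;> simp [mul_left_comm])

@[simp] lemma coe_mul (x y : ℓ²(ℕ, ℂ)) : ⇑(mul x y) = seqShift fun k => x k * y k := rfl

lemma mul_comm (x y : ℓ²(ℕ, ℂ)) : mul x y = mul y x :=
  lp.ext <| by simp only [coe_mul, _root_.mul_comm]

lemma norm_mul_le (x y : ℓ²(ℕ, ℂ)) : ‖mul x y‖ ≤ ‖x‖ * ‖y‖ := by
  let xy : ℓ²(ℕ, ℂ) := ⟨⇑x * ⇑y, lp.memℓp_mul two_ne_zero x y⟩
  calc ‖mul x y‖ = ‖xy‖ := lp.norm_eq_of_coe_eq_seqShift (by norm_num) rfl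
    _ ≤ ‖x‖ * ‖y‖ := lp.norm_le_of_coe_eq_mul two_ne_zero rfl

def basis : HilbertBasis ℕ ℂ ℓ²(ℕ, ℂ) := HilbertBasis.ofRepr (LinearIsometryEquiv.refl ℂ _)

lemma basis_apply (i : ℕ) : basis i = lp.single 2 i 1 := basis.repr_self i

lemma mul_basis_self (i : ℕ) : mul (basis i) (basis i) = basis (i + 1) := by
  refine lp.ext (funext fun k => ?_)
  cases k <;> simp [basis_apply, Pi.single_apply]

lemma mul_basis_of_ne {i j : ℕ} (hij : i ≠ j) : mul (basis i) (basis j) = 0 := by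
  refine lp.ext (funext fun k => ?_)
  cases k <;> simp [basis_apply, Pi.single_apply]
  omega

lemma structConst_ne_zero {i k : ℕ} (h : structConst mul basis i k ≠ 0) : k = i + 1 := by
  by_contra hk
  rw [structConst, mul_basis_self, basis.repr_self, lp.single_apply_ne 2 _ _ hk] at h
  exact h rfl

def algebra : HilbertEvolutionAlgebra where
  H := ℓ²(ℕ, ℂ)
  mul := mul
  comm := mul_comm
  cont x := AddMonoidHomClass.continuous_of_bound (mul x) ‖x‖ (norm_mul_le x)
  basis := basis
  natural _ _ := mul_basis_of_ne

lemma ppow_apply_ne_zero {v : ℓ²(ℕ, ℂ)} (hv : ∀ k, v k ≠ 0) (n : ℕ) :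
    ppow mul v (n + 1) n ≠ 0 := by
  induction n with
  | zero => exact hv 0
  | succ n ih => exact mul_ne_zero ih (hv n)

lemma ppow_ne_zero {v : ℓ²(ℕ, ℂ)} (hv : ∀ k, v k ≠ 0) {n : ℕ} (hn : 1 ≤ n) :
    ppow mul v n ≠ 0 := by
  obtain ⟨m, rfl⟩ := Nat.exists_eq_add_of_le' hn
  intro h
  exact ppow_apply_ne_zero hv m (by simp [h])

def geometric : ℓ²(ℕ, ℂ) :=
  ⟨fun n => (2⁻¹ : ℂ) ^ n,
    have hsum := summable_norm_geometric_of_norm_lt_one (r := (2⁻¹ : ℂ)) (by norm_num)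
    (memℓp_gen (p := 1) (by simpa using hsum)).of_exponent_ge one_le_two⟩

end ShiftEvolutionAlgebra

end

/-- There exists a complex separable Hilbert evolution algebra `𝒜` whose
associated digraph `G(𝒜,𝓑)` has no oriented cycles and which nevertheless is not nil:
there is `v ∈ 𝒜` with `v^n ≠ 0` for all `n ≥ 1`. Hence for infinite-dimensional Hilbert
evolution algebras the absence of oriented cycles does not imply that the algebra is nil. -/
theorem stmt_19 :
    ∃ A : HilbertEvolutionAlgebra,
      ¬ HasOrientedCycle (structConst A.mul A.basis) ∧
      ∃ v : A.H, ∀ n : ℕ, 1 ≤ n → ppow A.mul v n ≠ 0 := by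
  refine ⟨ShiftEvolutionAlgebra.algebra, not_hasOrientedCycle_of_lt fun i k h => ?_,
    ShiftEvolutionAlgebra.geometric, fun _ => ShiftEvolutionAlgebra.ppow_ne_zero fun k => ?_⟩
  · rw [ShiftEvolutionAlgebra.structConst_ne_zero h]
    exact Nat.lt_add_one i
  · exact pow_ne_zero k (by norm_num)
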